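/- If α ∧ X ψ ∈ DNF(φ), then CF(ψ) ⊆ cl(φ), where cl(φ) is the set of subformulas of φ together with True. -/

import Mathlib

namespace DNFLTL

/-- Literals: atomic propositions or their negations. -/
inductive Lit (AP : Type) : Type
  | pos : AP → Lit AP
  | neg : AP → Lit AP
deriving DecidableEq

/-- LTL formulas in negation normal form:
`True | a | ¬a | φ∧φ | φ∨φ | φ U φ | φ R φ | X φ`. -/
inductive LTL (AP : Type) : Type
  | tt    : LTL AP
  | atom  : AP → LTL AP
  | natom : AP → LTL AP
  | and   : LTL AP → LTL AP → LTL AP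
  | or    : LTL AP → LTL AP → LTL AP
  | untl  : LTL AP → LTL AP → LTL AP
  | rel   : LTL AP → LTL AP → LTL AP
  | next  : LTL AP → LTL AP
deriving DecidableEq

variable {AP : Type}

/-- The suffix `ξ_i` of an infinite word. -/
def suff (ξ : ℕ → Set AP) (i : ℕ) : ℕ → Set AP := fun n => ξ (n + i)

/-- Standard LTL satisfaction `ξ ⊨ φ`. -/
def Sat : (ℕ → Set AP) → LTL AP → Prop
  | _, .tt => True
  | ξ, .atom a => a ∈ ξ 0
  | ξ, .natom a => a ∉ ξ 0
  | ξ, .and φ ψ => Sat ξ φ ∧ Sat ξ ψ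
  | ξ, .or φ ψ => Sat ξ φ ∨ Sat ξ ψ
  | ξ, .untl φ ψ => ∃ i, Sat (suff ξ i) ψ ∧ ∀ j < i, Sat (suff ξ j) φ
  | ξ, .rel φ ψ => (∀ i, Sat (suff ξ i) ψ) ∨
      ∃ i, Sat (suff ξ i) φ ∧ Sat (suff ξ i) ψ ∧ ∀ j < i, Sat (suff ξ j) ψ
  | ξ, .next φ => Sat (suff ξ 1) φ

/-- A letter `ω ∈ 2^AP` satisfies a literal. -/
def SatLit (ω : Set AP) : Lit AP → Prop
  | .pos a => a ∈ ω
  | .neg a => a ∉ ω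

/-- A letter satisfies a finite conjunction of literals (represented as its set of literals). -/
def SatConj (ω : Set AP) (α : Set (Lit AP)) : Prop := ∀ l ∈ α, SatLit ω l

/-- `DNF φ`: the set of clauses `α ∧ X ψ` of the disjunctive normal form of `φ`.
A clause is a pair `(α, ψ)` where `α` is a finite conjunction of literals,
represented as its set `CF(α)` of literals. -/
def DNF : LTL AP → Set (Set (Lit AP) × LTL AP)
  | .tt => {(∅, .tt)}
  | .atom a => {({Lit.pos a}, .tt)}
  | .natom a => {({Lit.neg a}, .tt)}
  | .next φ => {(∅, φ)}
  | .or φ ψ => DNF φ ∪ DNF ψ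
  | .and φ ψ => {c | ∃ c1 ∈ DNF φ, ∃ c2 ∈ DNF ψ, c = (c1.1 ∪ c2.1, .and c1.2 c2.2)}
  | .untl φ ψ => DNF ψ ∪ {c | ∃ c1 ∈ DNF φ, c = (c1.1, .and c1.2 (.untl φ ψ))}
  | .rel φ ψ =>
      {c | ∃ c1 ∈ DNF φ, ∃ c2 ∈ DNF ψ, c = (c1.1 ∪ c2.1, .and c1.2 c2.2)} ∪
      {c | ∃ c2 ∈ DNF ψ, c = (c2.1, .and c2.2 (.rel φ ψ))}

/-- `φ →ω ψ`: transition on a letter. -/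
def StepW (φ : LTL AP) (ω : Set AP) (ψ : LTL AP) : Prop :=
  ∃ α, (α, ψ) ∈ DNF φ ∧ SatConj ω α

/-- `φ →η ψ`: expansion along a finite word. -/
def StepWord : LTL AP → List (Set AP) → LTL AP → Prop
  | φ, [], ψ => φ = ψ
  | φ, ω :: η, ψ => ∃ χ, StepW φ ω χ ∧ StepWord χ η ψ

/-- `φ →α ψ` for some label `α`: a single expansion step. -/
def Expand (φ ψ : LTL AP) : Prop := ∃ α, (α, ψ) ∈ DNF φ

/-- `EF φ`: all formulas expandable from `φ`, together with `φ` itself. -/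
def EF (φ : LTL AP) : Set (LTL AP) := {ψ | Relation.ReflTransGen Expand φ ψ}

/-- `φ ↪ ψ`: expandable by a nonempty chain. -/
def ExpandPlus (φ ψ : LTL AP) : Prop := Relation.TransGen Expand φ ψ

/-- The prefix `ξ^n` of an infinite word (first `n` letters). -/
def pref (ξ : ℕ → Set AP) (n : ℕ) : List (Set AP) := (List.range n).map ξ

/-- The finite segment `ξ(a) ξ(a+1) … ξ(b-1)` of an infinite word. -/
def seg (ξ : ℕ → Set AP) (a b : ℕ) : List (Set AP) :=
  (List.range (b - a)).map (fun j => ξ (a + j))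

/-- `φ →ξ φ` for an infinite word `ξ`: `ξ` can be partitioned into finite nonempty
words `η0 η1 η2 …` (given by strictly monotone cut points) with `φ →ηi φ` for all `i`. -/
def LoopOn (φ : LTL AP) (ξ : ℕ → Set AP) : Prop :=
  ∃ k : ℕ → ℕ, k 0 = 0 ∧ StrictMono k ∧ ∀ i, StepWord φ (seg ξ (k i) (k (i + 1))) φ

/-- `CF φ`: the conjuncts of `φ`, with `CF True = ∅`. -/
def CF : LTL AP → Set (LTL AP)
  | .tt => ∅
  | .and φ ψ => CF φ ∪ CF ψ
  | φ => {φ}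

/-- `S ⊨_f φ` for a set of literals `S`. -/
def SatF (S : Set (Lit AP)) : LTL AP → Prop
  | .tt => True
  | .atom a => Lit.pos a ∈ S
  | .natom a => Lit.neg a ∈ S
  | .and φ ψ => SatF S φ ∧ SatF S ψ
  | .or φ ψ => SatF S φ ∨ SatF S ψ
  | .untl _ ψ => SatF S ψ
  | .rel _ ψ => SatF S ψ
  | .next ψ => SatF S ψ

/-- A labelled expansion chain `φ = φ0 →α0 φ1 →α1 … →αn φ(n+1) = χ` along the
finite word `η = ω0…ωn` with `ωi ⊨ αi`, accumulating `S = ⋃ CF(αj)`. -/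
inductive LChain : LTL AP → List (Set AP) → Set (Lit AP) → LTL AP → Prop
  | nil (φ : LTL AP) : LChain φ [] ∅ φ
  | cons {φ ψ χ : LTL AP} {η : List (Set AP)} {S α : Set (Lit AP)} {ω : Set AP} :
      (α, ψ) ∈ DNF φ → SatConj ω α → LChain ψ η S χ → LChain φ (ω :: η) (α ∪ S) χ

/-- `η ⊨_f φ` for a finite word `η`. -/
def SatWF (η : List (Set AP)) (φ : LTL AP) : Prop :=
  ∃ S χ, LChain φ η S χ ∧ SatF S φ

/-- The obligation set `OS φ`. -/
def OS : LTL AP → Set (Set (Lit AP))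
  | .tt => {∅}
  | .atom a => {{Lit.pos a}}
  | .natom a => {{Lit.neg a}}
  | .next ψ => OS ψ
  | .or φ ψ => OS φ ∪ OS ψ
  | .and φ ψ => {S | ∃ S1 ∈ OS φ, ∃ S2 ∈ OS ψ, S = S1 ∪ S2}
  | .untl _ ψ => OS ψ
  | .rel _ ψ => OS ψ

/-- The subformulas of a formula. -/
def subf [DecidableEq AP] : LTL AP → Finset (LTL AP)
  | .tt => {.tt}
  | .atom a => {.atom a}
  | .natom a => {.natom a}
  | .and φ ψ => insert (.and φ ψ) (subf φ ∪ subf ψ)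
  | .or φ ψ => insert (.or φ ψ) (subf φ ∪ subf ψ)
  | .untl φ ψ => insert (.untl φ ψ) (subf φ ∪ subf ψ)
  | .rel φ ψ => insert (.rel φ ψ) (subf φ ∪ subf ψ)
  | .next φ => insert (.next φ) (subf φ)

/-- `cl φ`: the subformulas of `φ` together with `True`. -/
def cl [DecidableEq AP] (φ : LTL AP) : Finset (LTL AP) := insert .tt (subf φ)

/-- The atomic propositions appearing in a formula. -/
def atoms [DecidableEq AP] : LTL AP → Finset AP
  | .tt => ∅
  | .atom a => {a}
  | .natom a => {a}
  | .and φ ψ => atoms φ ∪ atoms ψ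
  | .or φ ψ => atoms φ ∪ atoms ψ
  | .untl φ ψ => atoms φ ∪ atoms ψ
  | .rel φ ψ => atoms φ ∪ atoms ψ
  | .next φ => atoms φ

/-- No subformula has `R` as root operator. -/
def ReleaseFree : LTL AP → Prop
  | .tt => True
  | .atom _ => True
  | .natom _ => True
  | .and φ ψ => ReleaseFree φ ∧ ReleaseFree ψ
  | .or φ ψ => ReleaseFree φ ∧ ReleaseFree ψ
  | .untl φ ψ => ReleaseFree φ ∧ ReleaseFree ψ
  | .rel _ _ => False
  | .next φ => ReleaseFree φ

/-- No subformula has `U` as root operator. -/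
def UntilFree : LTL AP → Prop
  | .tt => True
  | .atom _ => True
  | .natom _ => True
  | .and φ ψ => UntilFree φ ∧ UntilFree ψ
  | .or φ ψ => UntilFree φ ∧ UntilFree ψ
  | .untl _ _ => False
  | .rel φ ψ => UntilFree φ ∧ UntilFree ψ
  | .next φ => UntilFree φ

/-- The root operator is Until or Release. -/
def isUntilOrRelease : LTL AP → Prop
  | .untl _ _ => True
  | .rel _ _ => True
  | _ => False
section Subformulas

variable [DecidableEq AP]

theorem mem_subf_self (φ : LTL AP) : φ ∈ subf φ := by
  cases φ <;> simp [subf]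

theorem CF_subset_subf (φ : LTL AP) : CF φ ⊆ ↑(subf φ) := by
  induction φ with
  | tt => exact Set.empty_subset _
  | and φ ψ ihφ ihψ =>
    simp only [CF, subf, Finset.coe_insert, Finset.coe_union]
    exact (Set.union_subset_union ihφ ihψ).trans (Set.subset_insert _ _)
  | _ => exact Set.singleton_subset_iff.mpr (mem_subf_self _)

/-- `True` is never a conjunct, so `cl` sharpens to `subf` here. -/
theorem CF_subset_subf_of_mem_DNF {φ ψ : LTL AP} {α : Set (Lit AP)} (h : (α, ψ) ∈ DNF φ) :
    CF ψ ⊆ ↑(subf φ) := by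
  induction φ generalizing ψ α with
  | tt | atom | natom =>
    obtain ⟨-, rfl⟩ := Prod.mk.inj h
    exact Set.empty_subset _
  | next φ =>
    obtain ⟨-, rfl⟩ := Prod.mk.inj h
    simpa only [subf, Finset.coe_insert] using
      (CF_subset_subf _).trans (Set.subset_insert _ _)
  | or φ₁ φ₂ ih₁ ih₂ =>
    simp only [subf, Finset.coe_insert, Finset.coe_union]
    rcases h with h | h
    · exact (ih₁ h).trans (Set.subset_union_left.trans (Set.subset_insert _ _))
    · exact (ih₂ h).trans (Set.subset_union_right.trans (Set.subset_insert _ _))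
  | and φ₁ φ₂ ih₁ ih₂ =>
    obtain ⟨⟨α₁, ψ₁⟩, h₁, ⟨α₂, ψ₂⟩, h₂, heq⟩ := h
    obtain ⟨-, rfl⟩ := Prod.mk.inj heq
    simp only [CF, subf, Finset.coe_insert, Finset.coe_union]
    exact (Set.union_subset_union (ih₁ h₁) (ih₂ h₂)).trans (Set.subset_insert _ _)
  | untl φ₁ φ₂ ih₁ ih₂ =>
    simp only [subf, Finset.coe_insert, Finset.coe_union]
    rcases h with h | ⟨⟨α₁, ψ₁⟩, h₁, heq⟩
    · exact (ih₂ h).trans (Set.subset_union_right.trans (Set.subset_insert _ _))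
    · obtain ⟨-, rfl⟩ := Prod.mk.inj heq
      exact Set.union_subset
        ((ih₁ h₁).trans (Set.subset_union_left.trans (Set.subset_insert _ _)))
        (Set.singleton_subset_iff.mpr (Set.mem_insert _ _))
  | rel φ₁ φ₂ ih₁ ih₂ =>
    simp only [subf, Finset.coe_insert, Finset.coe_union]
    rcases h with ⟨⟨α₁, ψ₁⟩, h₁, ⟨α₂, ψ₂⟩, h₂, heq⟩ | ⟨⟨α₂, ψ₂⟩, h₂, heq⟩
      <;> obtain ⟨-, rfl⟩ := Prod.mk.inj heq
    · exact (Set.union_subset_union (ih₁ h₁) (ih₂ h₂)).trans (Set.subset_insert _ _)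
    · exact Set.union_subset
        ((ih₂ h₂).trans (Set.subset_union_right.trans (Set.subset_insert _ _)))
        (Set.singleton_subset_iff.mpr (Set.mem_insert _ _))

end Subformulas

/-- if `α ∧ X ψ ∈ DNF(φ)` then `CF(ψ) ⊆ cl(φ)`. -/
theorem CF_subset_cl_of_DNF {AP : Type} [DecidableEq AP] (φ ψ : LTL AP)
    (α : Set (Lit AP)) (h : (α, ψ) ∈ DNF φ) :
    CF ψ ⊆ ↑(cl φ) := by
  rw [cl, Finset.coe_insert]
  exact (CF_subset_subf_of_mem_DNF h).trans (Set.subset_insert _ _)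

end DNFLTL
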